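/- Let (X, dist_X) be a metric space equipped with a family 𝒟 = {dist_t : t ∈ [0,∞)} of pseudometrics. Assume: (1) there are positive constants A and m such that for every sufficiently small ε > 0, X admits a covering by at most A·ε^{−m} balls of radius ε for the distance dist_X; and (2) there are constants c, d ≥ 0 and a function φ : [0,∞) → ℝ with φ(t) → 0 as t → ∞ such that dist_t(x,y) ≤ e^{ct+d}·dist_X(x,y) + φ(t) for all t ≥ 0 and all x,y ∈ X. Then the entropy h_𝒟(X) is at most equal to m·c. -/

import Mathlib

open Filter Set MeasureTheory
open scoped ENNReal Topology

variable {X : Type*}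

/-- Minimal number (in `ℕ∞`) of balls of radius `ε` with respect to the
pseudometric `d` (with centers in `X`) needed to cover `Y`. -/
noncomputable def coverNum (d : X → X → ℝ) (Y : Set X) (ε : ℝ) : ℕ∞ :=
  ⨅ (s : Finset X) (_ : Y ⊆ ⋃ x ∈ s, {y | d x y ≤ ε}), (s.card : ℕ∞)

/-- Maximal cardinality (in `ℕ∞`) of an `ε`-separated subset of `Y`
with respect to the pseudometric `d`: a set `F` is `ε`-separated if
`d x y > ε` for all distinct `x, y ∈ F`. -/
noncomputable def sepNum (d : X → X → ℝ) (Y : Set X) (ε : ℝ) : ℕ∞ :=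
  ⨆ (s : Finset X) (_ : (↑s : Set X) ⊆ Y ∧
      ∀ x ∈ s, ∀ y ∈ s, x ≠ y → ε < d x y), (s.card : ℕ∞)

/-- Logarithm of an extended natural number, as an element of `[0, ∞]`. -/
noncomputable def elog (n : ℕ∞) : ℝ≥0∞ :=
  if n = ⊤ then ⊤ else ENNReal.ofReal (Real.log n.toNat)

/-- The entropy of `Y ⊆ X` with respect to the family of pseudometrics
`𝒟 = {d t : t ∈ [0,∞)}` :
`h_𝒟(Y) = sup_{ε>0} limsup_{t→∞} (1/t) log N(Y,t,ε)`. -/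
noncomputable def entropy (d : ℝ → X → X → ℝ) (Y : Set X) : ℝ≥0∞ :=
  ⨆ (ε : ℝ) (_ : 0 < ε),
    Filter.limsup
      (fun t : ℝ => ENNReal.ofReal t⁻¹ * elog (coverNum (d t) Y ε)) atTop

/- Once `φ t ≤ ε / 2`, every `dist`-ball of radius `δ = η e^{-(ct+e)}` with `η ≤ ε / 2` lies in
the `d t`-ball of radius `ε` with the same centre. So `log N(X, t, ε) ≤ log (A δ^{-m})`, which is
`m c t + O(1)` because `log δ` is affine in `t`; dividing by `t` leaves `m c` in the limit. -/

lemma coverNum_anti {d₁ d₂ : X → X → ℝ} {Y : Set X} {δ ε : ℝ}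
    (h : ∀ x y, d₁ x y ≤ δ → d₂ x y ≤ ε) :
    coverNum d₂ Y ε ≤ coverNum d₁ Y δ := by
  refine le_iInf₂ fun s hs => iInf₂_le s fun y hy => ?_
  obtain ⟨x, hxs, hxy⟩ := Set.mem_iUnion₂.1 (hs hy)
  exact Set.mem_iUnion₂.2 ⟨x, hxs, h x y hxy⟩

lemma coverNum_le_of_le_mul_add {d₁ d₂ : X → X → ℝ} {Y : Set X} {a b δ ε : ℝ} (ha : 0 ≤ a)
    (h : ∀ x y, d₂ x y ≤ a * d₁ x y + b) (hδ : a * δ + b ≤ ε) :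
    coverNum d₂ Y ε ≤ coverNum d₁ Y δ :=
  coverNum_anti fun x y hxy => by nlinarith [h x y]

lemma elog_le_ofReal_log {n : ℕ∞} {R : ℝ} (h : (n : ℝ≥0∞) ≤ ENNReal.ofReal R) :
    elog n ≤ ENNReal.ofReal (Real.log R) := by
  have hn : n ≠ ⊤ := by
    rintro rfl
    exact ENNReal.ofReal_ne_top (top_le_iff.1 h)
  lift n to ℕ using hn
  rw [elog, if_neg (ENat.natCast_ne_top n), ENat.toNat_natCast]
  rcases Nat.eq_zero_or_pos n with rfl | hpos
  · simp
  have hR : (n : ℝ) ≤ R := by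
    have hR0 : 0 < R := ENNReal.ofReal_pos.1 <| (Nat.cast_pos.2 hpos).trans_le h
    exact (ENNReal.ofReal_le_ofReal_iff hR0.le).1 (by simpa using h)
  exact ENNReal.ofReal_le_ofReal (Real.log_le_log (Nat.cast_pos.2 hpos) hR)

lemma limsup_inv_mul_le_of_eventually_le_affine {f : ℝ → ℝ≥0∞} {K L : ℝ}
    (h : ∀ᶠ t in atTop, f t ≤ ENNReal.ofReal (K + L * t)) :
    limsup (fun t => ENNReal.ofReal t⁻¹ * f t) atTop ≤ ENNReal.ofReal L := by
  have hbound : ∀ᶠ t in atTop,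
      ENNReal.ofReal t⁻¹ * f t ≤ ENNReal.ofReal (t⁻¹ * K + L) := by
    filter_upwards [h, eventually_gt_atTop 0] with t hft ht
    calc ENNReal.ofReal t⁻¹ * f t ≤ ENNReal.ofReal t⁻¹ * ENNReal.ofReal (K + L * t) :=
          mul_le_mul_right hft _
      _ = ENNReal.ofReal (t⁻¹ * K + L) := by
          rw [← ENNReal.ofReal_mul (by positivity)]
          congr 1
          field_simp
  have hlim : Tendsto (fun t : ℝ => ENNReal.ofReal (t⁻¹ * K + L)) atTop
      (𝓝 (ENNReal.ofReal L)) := by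
    have h₀ := (tendsto_inv_atTop_zero.mul_const K).add_const L
    rw [zero_mul, zero_add] at h₀
    exact (ENNReal.continuous_ofReal.tendsto L).comp h₀
  exact (limsup_le_limsup hbound).trans hlim.limsup_eq.le

theorem entropy_le_of_polynomial_cover_general [MetricSpace X]
    (d : ℝ → X → X → ℝ)
    {A m : ℝ} (hA : 0 < A)
    (hcover : ∃ ε₀ > 0, ∀ ε : ℝ, 0 < ε → ε < ε₀ →
      ((coverNum (fun x y : X => dist x y) (Set.univ : Set X) ε : ℕ∞) : ℝ≥0∞)
        ≤ ENNReal.ofReal (A * ε ^ (-m)))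
    {c e : ℝ} (hc : 0 ≤ c) (he : 0 ≤ e)
    (φ : ℝ → ℝ) (hφ : Filter.Tendsto φ Filter.atTop (nhds 0))
    (hd : ∀ t : ℝ, 0 ≤ t → ∀ x y : X,
      d t x y ≤ Real.exp (c * t + e) * dist x y + φ t) :
    entropy d (Set.univ : Set X) ≤ ENNReal.ofReal (m * c) := by
  obtain ⟨ε₀, hε₀, hcov⟩ := hcover
  refine iSup₂_le fun ε hε => ?_
  set η := min ε ε₀ / 2 with hη_def
  have hη : 0 < η := by positivity
  have hηε : η ≤ ε / 2 := by linarith [min_le_left ε ε₀]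
  have hηε₀ : η < ε₀ := by linarith [min_le_right ε ε₀]
  refine limsup_inv_mul_le_of_eventually_le_affine
    (K := Real.log A + m * (e - Real.log η)) (L := m * c) ?_
  filter_upwards [eventually_ge_atTop 0, hφ.eventually (ge_mem_nhds (half_pos hε))]
    with t ht hφt
  set δ := η * Real.exp (-(c * t + e))
  have hδ : 0 < δ := by positivity
  have hδε₀ : δ < ε₀ := by
    have : Real.exp (-(c * t + e)) ≤ 1 := Real.exp_le_one_iff.2 (neg_nonpos.2 (by positivity))
    exact (mul_le_of_le_one_right hη.le this).trans_lt hηε₀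
  have hN : coverNum (d t) univ ε ≤ coverNum (fun x y : X => dist x y) univ δ := by
    refine coverNum_le_of_le_mul_add (Real.exp_pos _).le (hd t ht) ?_
    have : Real.exp (c * t + e) * δ = η := by
      rw [mul_left_comm, ← Real.exp_add, add_neg_cancel, Real.exp_zero, mul_one]
    linarith
  calc elog (coverNum (d t) univ ε) ≤ ENNReal.ofReal (Real.log (A * δ ^ (-m))) :=
        elog_le_ofReal_log ((ENat.toENNReal_le.2 hN).trans (hcov δ hδ hδε₀))
    _ = ENNReal.ofReal (Real.log A + m * (e - Real.log η) + m * c * t) := by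
        rw [Real.log_mul hA.ne' (by positivity), Real.log_rpow hδ,
          Real.log_mul hη.ne' (Real.exp_pos _).ne', Real.log_exp]
        ring_nf

/-- Let `(X, dist)` be a metric space equipped with a family
`𝒟 = {d t}` of pseudometrics. Assume that there are constants `A, m > 0` such
that for every small enough `ε > 0` the space `X` can be covered by at most
`A ε^{-m}` balls of radius `ε` for `dist`, and that
`d t ≤ e^{c t + e} dist + φ(t)` with `c, e ≥ 0` and `φ(t) → 0` as `t → ∞`.
Then `h_𝒟(X) ≤ m c`. -/
theorem entropy_le_of_polynomial_cover [MetricSpace X]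
    (d : ℝ → X → X → ℝ)
    {A m : ℝ} (hA : 0 < A) (hm : 0 < m)
    (hcover : ∃ ε₀ > 0, ∀ ε : ℝ, 0 < ε → ε < ε₀ →
      ((coverNum (fun x y : X => dist x y) (Set.univ : Set X) ε : ℕ∞) : ℝ≥0∞)
        ≤ ENNReal.ofReal (A * ε ^ (-m)))
    {c e : ℝ} (hc : 0 ≤ c) (he : 0 ≤ e)
    (φ : ℝ → ℝ) (hφ : Filter.Tendsto φ Filter.atTop (nhds 0))
    (hd : ∀ t : ℝ, 0 ≤ t → ∀ x y : X,
      d t x y ≤ Real.exp (c * t + e) * dist x y + φ t) :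
    entropy d (Set.univ : Set X) ≤ ENNReal.ofReal (m * c) :=
  entropy_le_of_polynomial_cover_general d hA hcover hc he φ hφ hd
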